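/- Let κ and ν be real numbers with κ > 0, ν ≥ 0, κ + ν ≤ 1, and 2κ(1−ν) > ν. Define sequences (N_n)_{n≥1} and (α_n)_{n≥1} of real numbers by N₁ = 1, α₁ = 0, and for all n ≥ 1: α_{n+1} = κ(N_n − α_n) and N_{n+1} = (1+κ−ν)N_n + (1−κ−ν)α_n. Then there exists a constant C ≥ 1 such that for all n ≥ 1, ρ(κ,ν)ⁿ/C ≤ N_n ≤ C·ρ(κ,ν)ⁿ. -/
import Mathlib


/-- The growth rate ρ(κ,ν) of the delayed-branching BRW. -/
noncomputable def rho (κ ν : ℝ) : ℝ :=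
  (1 - ν) / 2 + Real.sqrt ((1 - ν) ^ 2 / 4 + 2 * κ * (1 - ν))

theorem stmt_3 (κ ν : ℝ) (hκ : 0 < κ) (hν : 0 ≤ ν) (hκν : κ + ν ≤ 1)
    (hsup : ν < 2 * κ * (1 - ν)) (N α : ℕ → ℝ)
    (hN1 : N 1 = 1) (hα1 : α 1 = 0)
    (hαrec : ∀ n : ℕ, 1 ≤ n → α (n + 1) = κ * (N n - α n))
    (hNrec : ∀ n : ℕ, 1 ≤ n → N (n + 1) = (1 + κ - ν) * N n + (1 - κ - ν) * α n) :
    ∃ C : ℝ, 1 ≤ C ∧ ∀ n : ℕ, 1 ≤ n →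
      rho κ ν ^ n / C ≤ N n ∧ N n ≤ C * rho κ ν ^ n := by
  have h1ν : 0 < 1 - ν := by nlinarith
  have hD : (0:ℝ) ≤ (1 - ν) ^ 2 / 4 + 2 * κ * (1 - ν) := by positivity
  have hsq := Real.sq_sqrt hD
  have hsn := Real.sqrt_nonneg ((1 - ν) ^ 2 / 4 + 2 * κ * (1 - ν))
  have hρeq : rho κ ν ^ 2 = (1 - ν) * rho κ ν + 2 * κ * (1 - ν) := by
    unfold rho; linear_combination hsq
  have hρ1 : 1 < rho κ ν := by
    unfold rho; nlinarith [hsq, hsn]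
  have hρpos : 0 < rho κ ν := by linarith
  have hN2 : N 2 = 1 + κ - ν := by
    have := hNrec 1 le_rfl
    rw [hN1, hα1] at this
    simpa using this
  have hNN : ∀ n : ℕ, 1 ≤ n →
      N (n + 2) = (1 - ν) * N (n + 1) + 2 * κ * (1 - ν) * N n := by
    intro n hn
    linear_combination hNrec (n + 1) (by omega) + (1 - κ - ν) * hαrec n hn
      + κ * hNrec n hn
  have hrn : ∀ n : ℕ, rho κ ν ^ (n + 2)
      = (1 - ν) * rho κ ν ^ (n + 1) + 2 * κ * (1 - ν) * rho κ ν ^ n := by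
    intro n
    have : rho κ ν ^ (n + 2) = rho κ ν ^ n * rho κ ν ^ 2 := by ring
    rw [this, hρeq]; ring
  set C : ℝ := max (max (rho κ ν) (rho κ ν ^ 2 / (1 + κ - ν))) 2 with hCdef
  have hC2 : (2:ℝ) ≤ C := le_max_right _ _
  have hCρ : rho κ ν ≤ C := le_trans (le_max_left _ _) (le_max_left _ _)
  have hCρ2 : rho κ ν ^ 2 / (1 + κ - ν) ≤ C :=
    le_trans (le_max_right _ _) (le_max_left _ _)
  have h1κν : 0 < 1 + κ - ν := by linarith
  have hC1 : (1:ℝ) ≤ C := by linarith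
  have hCpos : (0:ℝ) < C := by linarith
  have key : ∀ n : ℕ, 1 ≤ n →
      (rho κ ν ^ n ≤ C * N n ∧ N n ≤ C * rho κ ν ^ n) ∧
      (rho κ ν ^ (n + 1) ≤ C * N (n + 1) ∧ N (n + 1) ≤ C * rho κ ν ^ (n + 1)) := by
    intro n hn
    induction n, hn using Nat.le_induction with
    | base =>
      have hb2 : rho κ ν ^ 2 ≤ C * (1 + κ - ν) := by
        rw [div_le_iff₀ h1κν] at hCρ2; linarith [hCρ2]
      refine ⟨⟨?_, ?_⟩, ?_, ?_⟩
      · rw [hN1]; simpa using hCρ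
      · rw [hN1]; nlinarith
      · rw [hN2]; simpa using hb2
      · rw [hN2]
        have hρ2ge : (1:ℝ) ≤ rho κ ν ^ (1 + 1) := by
          have h : rho κ ν ^ (1 + 1) = rho κ ν * rho κ ν := by ring
          rw [h]; nlinarith
        nlinarith [mul_le_mul hC2 hρ2ge zero_le_one (by linarith : (0:ℝ) ≤ C)]
    | succ n hn ih =>
      obtain ⟨⟨hL0, hU0⟩, hL1, hU1⟩ := ih
      refine ⟨⟨hL1, hU1⟩, ?_, ?_⟩
      · have t1 := mul_le_mul_of_nonneg_left hL1 h1ν.le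
        have t2 := mul_le_mul_of_nonneg_left hL0 (by positivity : (0:ℝ) ≤ 2 * κ * (1 - ν))
        calc rho κ ν ^ (n + 2)
            = (1 - ν) * rho κ ν ^ (n + 1) + 2 * κ * (1 - ν) * rho κ ν ^ n := hrn n
          _ ≤ (1 - ν) * (C * N (n + 1)) + 2 * κ * (1 - ν) * (C * N n) := by linarith
          _ = C * N (n + 2) := by rw [hNN n hn]; ring
      · have t1 := mul_le_mul_of_nonneg_left hU1 h1ν.le
        have t2 := mul_le_mul_of_nonneg_left hU0 (by positivity : (0:ℝ) ≤ 2 * κ * (1 - ν))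
        calc N (n + 2)
            = (1 - ν) * N (n + 1) + 2 * κ * (1 - ν) * N n := hNN n hn
          _ ≤ (1 - ν) * (C * rho κ ν ^ (n + 1)) + 2 * κ * (1 - ν) * (C * rho κ ν ^ n) := by
              linarith
          _ = C * rho κ ν ^ (n + 2) := by rw [hrn n]; ring
  refine ⟨C, hC1, fun n hn => ?_⟩
  obtain ⟨⟨hL, hU⟩, -⟩ := key n hn
  constructor
  · rw [div_le_iff₀ hCpos]; linarith [hL, mul_comm C (N n)]
  · exact hU
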